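/- arXiv:2211.15298 — 2 statements merged into one kernel-verified Lean document; each statement's English description precedes it below -/
import Mathlib

section
/- Let A be a closed subset of ℝ and let ν be a Borel measure on ℝ with ν(A) = 0 which is finite on every compact set disjoint from A. Define η on Borel sets B ⊆ ℝ by η(B) := ∞ if B ∩ A ≠ ∅ and η(B) := ν(B) if B ∩ A = ∅. Then η is a (countably additive) Borel measure on ℝ and η is outer regular: for every Borel set B, η(B) = inf{ η(U) : U open, B ⊆ U }. -/
open MeasureTheory Set Classical

lemma key_outer (A : Set ℝ) (hA : IsClosed A) (ν : Measure ℝ)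
    (hνfin : ∀ K : Set ℝ, IsCompact K → K ∩ A = ∅ → ν K < ⊤)
    (B : Set ℝ) (hBA : B ⊆ Aᶜ) (r : ENNReal) (hr : ν B < r) :
    ∃ U : Set ℝ, IsOpen U ∧ B ⊆ U ∧ U ⊆ Aᶜ ∧ ν U < r := by
  have hs : IsOpen (Aᶜ) := hA.isOpen_compl
  haveI := hs.locallyCompactSpace
  have hemb : MeasurableEmbedding (Subtype.val : (Aᶜ : Set ℝ) → ℝ) :=
    MeasurableEmbedding.subtype_coe hs.measurableSet
  set μ : Measure (Aᶜ : Set ℝ) := ν.comap Subtype.val with hμ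
  haveI : IsFiniteMeasureOnCompacts μ := by
    constructor
    intro K hK
    rw [hemb.comap_apply]
    have hKc : IsCompact (Subtype.val '' K) := hK.image continuous_subtype_val
    refine hνfin _ hKc ?_
    rw [eq_empty_iff_forall_notMem]
    rintro x ⟨⟨⟨y, hy⟩, _, rfl⟩, hxA⟩
    exact hy hxA
  set B' : Set (Aᶜ : Set ℝ) := Subtype.val ⁻¹' B with hB'
  have hμB' : μ B' ≤ ν B := by
    rw [hemb.comap_apply]
    exact measure_mono (image_preimage_subset _ _)
  obtain ⟨V, hBV, hVopen, hVlt⟩ := B'.exists_isOpen_lt_of_lt r (lt_of_le_of_lt hμB' hr)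
  refine ⟨Subtype.val '' V, hs.isOpenMap_subtype_val V hVopen, ?_, ?_, ?_⟩
  · intro x hx
    exact ⟨⟨x, hBA hx⟩, hBV hx, rfl⟩
  · rintro x ⟨⟨y, hy⟩, _, rfl⟩
    exact hy
  · rw [← hemb.comap_apply]
    exact hVlt

/-- Given a closed set `A ⊆ ℝ` and a Borel measure `ν` with `ν A = 0` which is finite
on compact sets disjoint from `A`, the set function `η` defined by `η B = ∞` if
`B ∩ A ≠ ∅` and `η B = ν B` otherwise is a countably additive Borel measure, and it
is outer regular: `η B = inf { η U : U open, B ⊆ U }` for every Borel set `B`. -/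
theorem stmt_6 (A : Set ℝ) (hA : IsClosed A) (ν : Measure ℝ)
    (hνA : ν A = 0)
    (hνfin : ∀ K : Set ℝ, IsCompact K → K ∩ A = ∅ → ν K < ⊤) :
    ∃ η : Measure ℝ,
      (∀ B : Set ℝ, MeasurableSet B →
        η B = if (B ∩ A).Nonempty then ⊤ else ν B) ∧
      (∀ B : Set ℝ, MeasurableSet B →
        η B = ⨅ (U : Set ℝ) (_ : IsOpen U) (_ : B ⊆ U), η U) := by
  classical
  set η : Measure ℝ := ν.restrict Aᶜ + (⊤ : ENNReal) • Measure.count.restrict A with hη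
  have happ : ∀ B : Set ℝ, MeasurableSet B →
      η B = if (B ∩ A).Nonempty then ⊤ else ν B := by
    intro B hB
    rw [hη]
    simp only [Measure.add_apply, Measure.smul_apply, smul_eq_mul,
      Measure.restrict_apply hB]
    by_cases h : (B ∩ A).Nonempty
    · rw [if_pos h, ENNReal.top_mul (Measure.count_ne_zero h), add_top]
    · rw [if_neg h]
      rw [not_nonempty_iff_eq_empty] at h
      have hBA : B ⊆ Aᶜ := by
        intro x hx hxA
        exact (eq_empty_iff_forall_notMem.1 h x) ⟨hx, hxA⟩
      rw [h, measure_empty, mul_zero, add_zero, inter_eq_left.2 hBA]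
  refine ⟨η, happ, ?_⟩
  intro B hB
  refine le_antisymm ?_ ?_
  · exact le_iInf fun U => le_iInf fun hU => le_iInf fun hBU => measure_mono hBU
  · by_cases h : (B ∩ A).Nonempty
    · rw [happ B hB, if_pos h]
      exact le_top
    · rw [happ B hB, if_neg h]
      rw [not_nonempty_iff_eq_empty] at h
      have hBA : B ⊆ Aᶜ := by
        intro x hx hxA
        exact (eq_empty_iff_forall_notMem.1 h x) ⟨hx, hxA⟩
      refine ENNReal.le_of_forall_pos_le_add fun ε hε hlt => ?_
      obtain ⟨U, hUopen, hBU, hUA, hUlt⟩ :=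
        key_outer A hA ν hνfin B hBA (ν B + ε)
          (ENNReal.lt_add_right hlt.ne (by exact_mod_cast hε.ne'))
      have hηU : η U = ν U := by
        rw [happ U hUopen.measurableSet, if_neg]
        rw [not_nonempty_iff_eq_empty, eq_empty_iff_forall_notMem]
        rintro x ⟨hxU, hxA⟩
        exact hUA hxU hxA
      calc ⨅ (U : Set ℝ) (_ : IsOpen U) (_ : B ⊆ U), η U ≤ η U :=
            iInf_le_of_le U (iInf_le_of_le hUopen (iInf_le _ hBU))
        _ ≤ ν B + ε := by rw [hηU]; exact hUlt.le
end

section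
/- Surjectivity of the initial trace map onto traces with nonempty singular part: let Λ be a nonempty closed subset of ℝ and let (y_j)_{j∈J} be a countable family (finite or infinite, repetitions allowed) of points of ℝ ∖ Λ such that for every compact set K ⊆ ℝ ∖ Λ the set { j ∈ J : y_j ∈ K } is finite. Then there exists a sequence x : ℕ → ℝ such that (i) Λ = { y ∈ ℝ : for every r > 0, the set { i : x_i ∈ (y−r, y+r) } is infinite }, and (ii) for every Borel set B ⊆ ℝ ∖ Λ, #{ i ∈ ℕ : x_i ∈ B } = #{ j ∈ J : y_j ∈ B }. -/
open Set

universe u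

/-- Surjectivity of the initial trace map onto traces with nonempty singular part:
given a nonempty closed `Λ ⊆ ℝ` and a countable family `(y_j)` of points of `ℝ \ Λ`
which is locally finite in `ℝ \ Λ`, there is a sequence `x : ℕ → ℝ` whose set of
accumulation-with-infinite-multiplicity points is exactly `Λ`, and which hits each
Borel set `B ⊆ ℝ \ Λ` exactly as many times as the family `(y_j)` does. -/
theorem stmt_8 {J : Type u} [Countable J]
    (Λ : Set ℝ) (hΛclosed : IsClosed Λ) (hΛne : Λ.Nonempty)
    (y : J → ℝ) (hy : ∀ j, y j ∉ Λ)
    (hfin : ∀ K : Set ℝ, IsCompact K → K ⊆ Λᶜ → {j : J | y j ∈ K}.Finite) :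
    ∃ x : ℕ → ℝ,
      (Λ = {z : ℝ | ∀ r > (0:ℝ), {i : ℕ | x i ∈ Ioo (z - r) (z + r)}.Infinite}) ∧
      (∀ B : Set ℝ, MeasurableSet B → B ⊆ Λᶜ →
        Cardinal.lift.{u} (Cardinal.mk {i : ℕ // x i ∈ B})
          = Cardinal.lift.{0} (Cardinal.mk {j : J // y j ∈ B})) := by
  classical
  obtain ⟨l0, hl0⟩ := hΛne
  obtain ⟨f, hf⟩ := Countable.exists_injective_nat J
  have : Nonempty ↥Λ := ⟨⟨l0, hl0⟩⟩
  obtain ⟨u, hu⟩ := TopologicalSpace.exists_dense_seq ↥Λ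
  -- the sequence
  set x : ℕ → ℝ := fun n =>
    if n % 2 = 0 then (u (Nat.unpair (n / 2)).1 : ℝ)
    else if h : ∃ j, f j = n / 2 then y h.choose else l0 with hxdef
  -- key dichotomy
  have key : ∀ i : ℕ, x i ∉ Λ → ∃ j : J, i = 2 * f j + 1 ∧ x i = y j := by
    intro i hi
    by_cases h0 : i % 2 = 0
    · exact absurd (by simp [hxdef, h0, Subtype.coe_prop]) hi
    · by_cases h1 : ∃ j, f j = i / 2
      · refine ⟨h1.choose, ?_, by simp [hxdef, h0, h1]⟩
        have := h1.choose_spec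
        omega
      · exact absurd (by simp [hxdef, h0, h1, hl0]) hi
  have hxodd : ∀ j : J, x (2 * f j + 1) = y j := by
    intro j
    have h0 : (2 * f j + 1) % 2 ≠ 0 := by omega
    have h2 : (2 * f j + 1) / 2 = f j := by omega
    have h1 : ∃ j', f j' = (2 * f j + 1) / 2 := ⟨j, h2.symm⟩
    have := h1.choose_spec
    have hjj : h1.choose = j := hf (by rw [this, h2])
    simp [hxdef, h0, h1, hjj]
  refine ⟨x, ?_, ?_⟩
  · ext z
    constructor
    · intro hz r hr
      -- dense range gives a point of Λ near z
      obtain ⟨m, hm⟩ := Metric.denseRange_iff.mp hu ⟨z, hz⟩ r hr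
      have hmem : (u m : ℝ) ∈ Ioo (z - r) (z + r) := by
        have : |z - (u m : ℝ)| < r := hm
        rw [abs_sub_lt_iff] at this
        constructor <;> linarith [this.1, this.2]
      refine Set.infinite_of_injective_forall_mem
        (f := fun k : ℕ => 2 * Nat.pair m k) ?_ ?_
      · intro a b hab
        simp only at hab
        exact (Nat.pair_eq_pair.mp (by omega : Nat.pair m a = Nat.pair m b)).2
      · intro k
        have h0 : (2 * Nat.pair m k) % 2 = 0 := by omega
        have h2 : (2 * Nat.pair m k) / 2 = Nat.pair m k := by omega
        have : x (2 * Nat.pair m k) = (u m : ℝ) := by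
          simp [hxdef, h0, h2]
        simpa [this] using hmem
    · intro hz
      by_contra hzΛ
      have hopen : IsOpen Λᶜ := hΛclosed.isOpen_compl
      obtain ⟨ε, hε, hball⟩ := Metric.isOpen_iff.mp hopen z hzΛ
      have hcb : Metric.closedBall z (ε / 2) ⊆ Λᶜ :=
        (Metric.closedBall_subset_ball (by linarith)).trans hball
      have hK := hfin (Metric.closedBall z (ε / 2)) (isCompact_closedBall z (ε / 2)) hcb
      have hsub : {i : ℕ | x i ∈ Ioo (z - ε / 2) (z + ε / 2)} ⊆
          (fun j : J => 2 * f j + 1) '' {j : J | y j ∈ Metric.closedBall z (ε / 2)} := by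
        intro i hi
        have hiIoo : x i ∈ Ioo (z - ε / 2) (z + ε / 2) := hi
        have hxcb : x i ∈ Metric.closedBall z (ε / 2) := by
          rw [Real.closedBall_eq_Icc]
          exact Ioo_subset_Icc_self hiIoo
        obtain ⟨j, hij, hxy⟩ := key i (fun h => hcb hxcb h)
        exact ⟨j, by simpa [← hxy] using hxcb, hij.symm⟩
      have hfinite : {i : ℕ | x i ∈ Ioo (z - ε / 2) (z + ε / 2)}.Finite :=
        ((hK.image _).subset hsub)
      exact (hz (ε / 2) (by linarith)) hfinite
  · intro B hB hBsub
    refine Cardinal.lift_mk_eq'.mpr ⟨Equiv.symm (Equiv.ofBijective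
      (fun j : {j : J // y j ∈ B} => (⟨2 * f j.1 + 1, by
        simpa [hxodd j.1] using j.2⟩ : {i : ℕ // x i ∈ B})) ⟨?_, ?_⟩)⟩
    · intro a b hab
      have : 2 * f a.1 + 1 = 2 * f b.1 + 1 := congrArg Subtype.val hab
      exact Subtype.ext (hf (by omega))
    · rintro ⟨i, hi⟩
      obtain ⟨j, hij, hxy⟩ := key i (fun h => hBsub hi h)
      exact ⟨⟨j, by rwa [← hxy]⟩, Subtype.ext hij.symm⟩
end
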